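/- arXiv:1307.4724 — 2 statements merged into one kernel-verified Lean document; each statement's English description precedes it below -/
import Mathlib

section
/- Let G and H be finite connected nontrivial simple graphs. Then the strong product G_SR ⊠ H_SR of the strong resolving graphs is a subgraph of the strong resolving graph (G ⊠ H)_SR of the strong product; that is, they have the same vertex set V(G) × V(H), and every pair of vertices adjacent in G_SR ⊠ H_SR is adjacent in (G ⊠ H)_SR. -/
/-! In `G ⊠ H` the distance is the maximum of the coordinate distances. If `(a, b)` moves to a
neighbour `(a', b')`, each coordinate distance to `(c, d)` stays at most its old value when that
coordinate is maximally distant, and at most `1` when it is fixed (`a = c` or `b = d`); since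
`(a, b) ≠ (c, d)` the old maximum is at least `1`, so the distance to `(c, d)` does not grow. -/

open SimpleGraph Finset

variable {α β : Type*}

/-- The strong product of two simple graphs: distinct vertices `(a,b)` and `(c,d)` are adjacent
iff (`a = c` or `a ~ c`) and (`b = d` or `b ~ d`). -/
def strongProd (G : SimpleGraph α) (H : SimpleGraph β) : SimpleGraph (α × β) where
  Adj x y := x ≠ y ∧ (x.1 = y.1 ∨ G.Adj x.1 y.1) ∧ (x.2 = y.2 ∨ H.Adj x.2 y.2)
  symm := by
    constructor
    rintro x y ⟨h1, h2, h3⟩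
    exact ⟨h1.symm, h2.imp Eq.symm (fun a => a.symm), h3.imp Eq.symm (fun a => a.symm)⟩
  loopless := ⟨fun x h => h.1 rfl⟩

/-- The Cartesian sum (disjunctive product) of two simple graphs. -/
def cartSum (G : SimpleGraph α) (H : SimpleGraph β) : SimpleGraph (α × β) where
  Adj x y := x ≠ y ∧ (G.Adj x.1 y.1 ∨ H.Adj x.2 y.2)
  symm := by
    constructor
    rintro x y ⟨h1, h2⟩
    exact ⟨h1.symm, h2.imp (fun a => a.symm) (fun a => a.symm)⟩
  loopless := ⟨fun x h => h.1 rfl⟩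

/-- `u` is maximally distant from `v` in `G`. -/
def MaximallyDistantFrom (G : SimpleGraph α) (u v : α) : Prop :=
  ∀ w, G.Adj u w → G.dist v w ≤ G.dist u v

/-- `u` and `v` are mutually maximally distant in `G`. -/
def MutuallyMaximallyDistant (G : SimpleGraph α) (u v : α) : Prop :=
  MaximallyDistantFrom G u v ∧ MaximallyDistantFrom G v u

/-- The strong resolving graph of `G`. -/
def strongResolvingGraph (G : SimpleGraph α) : SimpleGraph α where
  Adj u v := u ≠ v ∧ MutuallyMaximallyDistant G u v
  symm := by constructor; rintro u v ⟨h1, h2, h3⟩; exact ⟨h1.symm, h3, h2⟩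
  loopless := ⟨fun x h => h.1 rfl⟩

/-- A finset of vertices is independent if no two of its (distinct) members are adjacent. -/
def IsIndepFinset (G : SimpleGraph α) (s : Finset α) : Prop :=
  ∀ u ∈ s, ∀ v ∈ s, u ≠ v → ¬ G.Adj u v

/-- The independence number `β(G)`. -/
noncomputable def indepNum (G : SimpleGraph α) [Fintype α] : ℕ :=
  sSup {n | ∃ s : Finset α, IsIndepFinset G s ∧ s.card = n}

/-- `w` strongly resolves `u` and `v` in `G`. -/
def StronglyResolves (G : SimpleGraph α) (w u v : α) : Prop :=
  G.dist w u = G.dist w v + G.dist v u ∨ G.dist w v = G.dist w u + G.dist u v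

/-- A strong metric generator for `G`. -/
def IsStrongMetricGenerator (G : SimpleGraph α) (s : Finset α) : Prop :=
  ∀ u v : α, u ≠ v → ∃ w ∈ s, StronglyResolves G w u v

/-- The strong metric dimension of `G`. -/
noncomputable def sdim (G : SimpleGraph α) [Fintype α] : ℕ :=
  sInf {n | ∃ s : Finset α, IsStrongMetricGenerator G s ∧ s.card = n}

namespace SimpleGraph

variable {V W : Type*} {G : SimpleGraph V}

lemma dist_le_one_of_eq_or_adj {u v : V} (h : u = v ∨ G.Adj u v) : G.dist u v ≤ 1 := by
  rcases h with rfl | h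
  · simp
  · exact (dist_eq_one_iff_adj.mpr h).le

lemma Walk.dist_le_length_of_dist_map_adj_le_one {G' : SimpleGraph W} {u v : V}
    (p : G.Walk u v) (hG' : G'.Connected) {f : V → W}
    (hf : ∀ ⦃x y⦄, G.Adj x y → G'.dist (f x) (f y) ≤ 1) : G'.dist (f u) (f v) ≤ p.length := by
  induction p with
  | nil => simp
  | @cons u w v h p ih =>
    calc G'.dist (f u) (f v) ≤ G'.dist (f u) (f w) + G'.dist (f w) (f v) := hG'.dist_triangle
      _ ≤ 1 + p.length := Nat.add_le_add (hf h) ih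
      _ = (p.cons h).length := by rw [Walk.length_cons, Nat.add_comm]

lemma dist_le_max_one_of_eq_or_maximallyDistantFrom {u v w : V}
    (huv : u = v ∨ MaximallyDistantFrom G u v) (huw : u = w ∨ G.Adj u w) :
    G.dist v w ≤ max (G.dist u v) 1 := by
  rcases huv with rfl | huv
  · exact le_max_of_le_right (dist_le_one_of_eq_or_adj huw)
  rcases huw with rfl | huw
  · exact le_max_of_le_left dist_comm.le
  · exact le_max_of_le_left (huv w huw)

end SimpleGraph

section StrongProduct

variable {G : SimpleGraph α} {H : SimpleGraph β}

lemma boxProd_le_strongProd : G.boxProd H ≤ strongProd G H := by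
  rintro x y (⟨hG, hsnd⟩ | ⟨hH, hfst⟩)
  · exact ⟨fun h => hG.ne (congrArg Prod.fst h), Or.inr hG, Or.inl hsnd⟩
  · exact ⟨fun h => hH.ne (congrArg Prod.snd h), Or.inl hfst, Or.inr hH⟩

lemma strongProd_adj_of_adj_of_adj {a c : α} {b d : β} (hG : G.Adj a c) (hH : H.Adj b d) :
    (strongProd G H).Adj (a, b) (c, d) :=
  ⟨fun h => hG.ne (congrArg Prod.fst h), Or.inr hG, Or.inr hH⟩

lemma exists_walk_strongProd_length_eq_max {a c : α} {b d : β} (p : G.Walk a c)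
    (q : H.Walk b d) :
    ∃ r : (strongProd G H).Walk (a, b) (c, d), r.length = max p.length q.length := by
  induction p generalizing b with
  | nil =>
    exact ⟨(q.boxProdRight G _).mapLe boxProd_le_strongProd,
      (Walk.length_map _ _).trans (Walk.length_map _ _)⟩
  | cons hG p ih =>
    cases q with
    | nil =>
      exact ⟨((p.cons hG).boxProdLeft H _).mapLe boxProd_le_strongProd,
        (Walk.length_map _ _).trans (Walk.length_map _ _)⟩
    | cons hH q =>
      obtain ⟨r, hr⟩ := ih q
      refine ⟨.cons (strongProd_adj_of_adj_of_adj hG hH) r, ?_⟩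
      rw [Walk.length_cons, hr, Walk.length_cons, Walk.length_cons, Nat.succ_max_succ]

lemma dist_strongProd (hG : G.Connected) (hH : H.Connected) (x y : α × β) :
    (strongProd G H).dist x y = max (G.dist x.1 y.1) (H.dist x.2 y.2) := by
  obtain ⟨p, hp⟩ := hG.exists_walk_length_eq_dist x.1 y.1
  obtain ⟨q, hq⟩ := hH.exists_walk_length_eq_dist x.2 y.2
  obtain ⟨r, hr⟩ := exists_walk_strongProd_length_eq_max p q
  refine le_antisymm (hp ▸ hq ▸ hr ▸ dist_le r) ?_
  obtain ⟨s, hs⟩ := Reachable.exists_walk_length_eq_dist ⟨r⟩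
  rw [← hs]
  exact max_le
    (s.dist_le_length_of_dist_map_adj_le_one hG fun _ _ h => dist_le_one_of_eq_or_adj h.2.1)
    (s.dist_le_length_of_dist_map_adj_le_one hH fun _ _ h => dist_le_one_of_eq_or_adj h.2.2)

lemma maximallyDistantFrom_strongProd (hG : G.Connected) (hH : H.Connected) {a c : α}
    {b d : β} (hne : (a, b) ≠ (c, d)) (ha : a = c ∨ MaximallyDistantFrom G a c)
    (hb : b = d ∨ MaximallyDistantFrom H b d) :
    MaximallyDistantFrom (strongProd G H) (a, b) (c, d) := by
  rintro ⟨a', b'⟩ ⟨-, ha', hb'⟩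
  have one_le_max : 1 ≤ max (G.dist a c) (H.dist b d) := by
    by_cases hac : a = c
    · exact le_max_of_le_right (hH.pos_dist_of_ne fun hbd => hne (by rw [hac, hbd]))
    · exact le_max_of_le_left (hG.pos_dist_of_ne hac)
  simp only [dist_strongProd hG hH]
  calc max (G.dist c a') (H.dist d b')
      ≤ max (max (G.dist a c) 1) (max (H.dist b d) 1) := max_le_max
        (dist_le_max_one_of_eq_or_maximallyDistantFrom ha ha')
        (dist_le_max_one_of_eq_or_maximallyDistantFrom hb hb')
    _ = max (G.dist a c) (H.dist b d) := by
      rw [max_max_max_comm, max_self, max_eq_left one_le_max]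

end StrongProduct

theorem strongProd_SR_le_SR_strongProd_general
    (G : SimpleGraph α) (H : SimpleGraph β)
    (hG : G.Connected) (hH : H.Connected) :
    strongProd (strongResolvingGraph G) (strongResolvingGraph H) ≤
      strongResolvingGraph (strongProd G H) := by
  rintro ⟨a, b⟩ ⟨c, d⟩ ⟨hne, hac, hbd⟩
  exact ⟨hne,
    maximallyDistantFrom_strongProd hG hH hne (hac.imp_right (·.2.1)) (hbd.imp_right (·.2.1)),
    maximallyDistantFrom_strongProd hG hH hne.symm (hac.imp Eq.symm (·.2.2))
      (hbd.imp Eq.symm (·.2.2))⟩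

theorem strongProd_SR_le_SR_strongProd [Fintype α] [Fintype β]
    (G : SimpleGraph α) (H : SimpleGraph β)
    (hG : G.Connected) (hGn : Nontrivial α) (hH : H.Connected) (hHn : Nontrivial β) :
    strongProd (strongResolvingGraph G) (strongResolvingGraph H) ≤
      strongResolvingGraph (strongProd G H) :=
  strongProd_SR_le_SR_strongProd_general G H hG hH
end

section
/- Let G be a finite simple graph whose vertex set can be partitioned into β(G) cliques (a C-graph), and let H be any finite simple graph. Then β(G ⊠ H) = β(G) · β(H). -/
open SimpleGraph Finset

variable {α β : Type*}

/-- A `C`-graph: the vertex set can be partitioned into `β(G)` cliques. -/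
def IsCGraph (G : SimpleGraph α) [Fintype α] [DecidableEq α] : Prop :=
  ∃ P : Finpartition (Finset.univ : Finset α),
    P.parts.card = _root_.indepNum G ∧ ∀ p ∈ P.parts, G.IsClique (p : Set α)

/-- A `C₁`-graph: the vertex set can be partitioned into `β(G)` cliques together with one
singleton `{b}`, where `b` is an isolated vertex. -/
def IsC1Graph (G : SimpleGraph α) [Fintype α] [DecidableEq α] : Prop :=
  ∃ (P : Finpartition (Finset.univ : Finset α)) (b : α),
    {b} ∈ P.parts ∧ (∀ w, ¬ G.Adj b w) ∧
    P.parts.card = _root_.indepNum G + 1 ∧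
    ∀ p ∈ P.parts, p ≠ {b} → G.IsClique (p : Set α)

/-- The diameter of a graph: the largest distance between two vertices. -/
noncomputable def gDiam (G : SimpleGraph α) : ℕ := sSup {d | ∃ u v : α, G.dist u v = d}

/-!
Independent sets `s` of `G` and `t` of `H` give the independent set `s ×ˢ t` of `G ⊠ H`, so
`β(G) β(H) ≤ β(G ⊠ H)` always. Conversely, an independent set of `G ⊠ H` meets each layer
`K × V(H)` over a clique `K` of `G` in vertices with pairwise distinct, pairwise nonadjacent
second coordinates, hence in at most `β(H)` vertices; covering `V(G)` by `β(G)` cliques gives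
`β(G ⊠ H) ≤ β(G) β(H)`.
-/

section IndepNum

variable (G : SimpleGraph α) [Fintype α]

lemma bddAbove_card_isIndepFinset :
    BddAbove {n | ∃ s : Finset α, IsIndepFinset G s ∧ s.card = n} :=
  ⟨Fintype.card α, by rintro n ⟨s, -, rfl⟩; exact s.card_le_univ⟩

lemma IsIndepFinset.card_le_indepNum {s : Finset α} (hs : IsIndepFinset G s) :
    s.card ≤ _root_.indepNum G :=
  le_csSup (bddAbove_card_isIndepFinset G) ⟨s, hs, rfl⟩

lemma exists_isIndepFinset_card_eq_indepNum :
    ∃ s : Finset α, IsIndepFinset G s ∧ s.card = _root_.indepNum G :=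
  have hne : {n | ∃ s : Finset α, IsIndepFinset G s ∧ s.card = n}.Nonempty :=
    ⟨0, ∅, by simp [IsIndepFinset], rfl⟩
  Nat.sSup_mem hne (bddAbove_card_isIndepFinset G)

end IndepNum

section StrongProd

variable {G : SimpleGraph α} {H : SimpleGraph β}

lemma IsIndepFinset.product {s : Finset α} {t : Finset β} (hs : IsIndepFinset G s)
    (ht : IsIndepFinset H t) : IsIndepFinset (strongProd G H) (s ×ˢ t) := by
  rintro x hx y hy hxy ⟨-, h1 | h1, h2 | h2⟩
  · exact hxy (Prod.ext h1 h2)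
  · exact ht x.2 (mem_product.1 hx).2 y.2 (mem_product.1 hy).2 (H.ne_of_adj h2) h2
  all_goals exact hs x.1 (mem_product.1 hx).1 y.1 (mem_product.1 hy).1 (G.ne_of_adj h1) h1

lemma mul_indepNum_le_indepNum_strongProd [Fintype α] [Fintype β] :
    _root_.indepNum G * _root_.indepNum H ≤ _root_.indepNum (strongProd G H) := by
  obtain ⟨s, hs, hs_card⟩ := exists_isIndepFinset_card_eq_indepNum G
  obtain ⟨t, ht, ht_card⟩ := exists_isIndepFinset_card_eq_indepNum H
  rw [← hs_card, ← ht_card, ← card_product]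
  exact (hs.product ht).card_le_indepNum

lemma IsIndepFinset.snd_injOn_of_isClique {T : Finset (α × β)}
    (hT : IsIndepFinset (strongProd G H) T) {K : Set α} (hK : G.IsClique K) :
    Set.InjOn Prod.snd {x | x ∈ T ∧ x.1 ∈ K} := by
  rintro x ⟨hxT, hxK⟩ y ⟨hyT, hyK⟩ h2
  by_contra hxy
  have h1 : x.1 ≠ y.1 := fun h1 => hxy (Prod.ext h1 h2)
  exact hT x hxT y hyT hxy ⟨hxy, Or.inr (hK hxK hyK h1), Or.inl h2⟩

lemma IsIndepFinset.isIndepFinset_image_snd_of_isClique [DecidableEq β] {T : Finset (α × β)}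
    (hT : IsIndepFinset (strongProd G H) T) {K : Set α} [DecidablePred (· ∈ K)]
    (hK : G.IsClique K) : IsIndepFinset H ((T.filter (·.1 ∈ K)).image Prod.snd) := by
  intro _ hu _ hv h2 hadj
  obtain ⟨x, hx, rfl⟩ := mem_image.1 hu
  obtain ⟨y, hy, rfl⟩ := mem_image.1 hv
  obtain ⟨hxT, hxK⟩ := mem_filter.1 hx
  obtain ⟨hyT, hyK⟩ := mem_filter.1 hy
  have hxy : x ≠ y := fun h => h2 (congrArg Prod.snd h)
  have h1 : x.1 = y.1 ∨ G.Adj x.1 y.1 := (em _).imp_right (hK hxK hyK)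
  exact hT x hxT y hyT hxy ⟨hxy, h1, Or.inr hadj⟩

lemma IsIndepFinset.card_filter_fst_mem_clique_le [Fintype β] {T : Finset (α × β)}
    (hT : IsIndepFinset (strongProd G H) T) {K : Set α} [DecidablePred (· ∈ K)]
    (hK : G.IsClique K) : (T.filter (·.1 ∈ K)).card ≤ _root_.indepNum H := by
  classical
  rw [← card_image_of_injOn (by simpa using hT.snd_injOn_of_isClique hK)]
  exact (hT.isIndepFinset_image_snd_of_isClique hK).card_le_indepNum

lemma indepNum_strongProd_le_card_mul [Fintype α] [Fintype β] (C : Finset (Finset α))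
    (hC_cover : ∀ a, ∃ K ∈ C, a ∈ K) (hC_clique : ∀ K ∈ C, G.IsClique (K : Set α)) :
    _root_.indepNum (strongProd G H) ≤ C.card * _root_.indepNum H := by
  classical
  obtain ⟨T, hT, hT_card⟩ := exists_isIndepFinset_card_eq_indepNum (strongProd G H)
  have hT_cover : T ⊆ C.biUnion fun K => T.filter (·.1 ∈ K) := by
    intro x hx
    obtain ⟨K, hK, hxK⟩ := hC_cover x.1
    exact mem_biUnion.2 ⟨K, hK, mem_filter.2 ⟨hx, hxK⟩⟩
  calc _root_.indepNum (strongProd G H) = T.card := hT_card.symm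
    _ ≤ ∑ K ∈ C, (T.filter (·.1 ∈ K)).card := (card_le_card hT_cover).trans card_biUnion_le
    _ ≤ ∑ _K ∈ C, _root_.indepNum H :=
      sum_le_sum fun K hK => by simpa using hT.card_filter_fst_mem_clique_le (hC_clique K hK)
    _ = C.card * _root_.indepNum H := by rw [sum_const, smul_eq_mul]

end StrongProd

theorem indepNum_strongProd_of_CGraph [Fintype α] [DecidableEq α] [Fintype β]
    (G : SimpleGraph α) (H : SimpleGraph β) (hC : IsCGraph G) :
    _root_.indepNum (strongProd G H) = _root_.indepNum G * _root_.indepNum H := by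
  obtain ⟨P, hP_card, hP_clique⟩ := hC
  refine le_antisymm ?_ mul_indepNum_le_indepNum_strongProd
  rw [← hP_card]
  exact indepNum_strongProd_le_card_mul P.parts (fun a => P.exists_mem (mem_univ a)) hP_clique
end
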